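/- arXiv:2402.16260 — 5 statements merged into one kernel-verified Lean document; each statement's English description precedes it below -/
import Mathlib

section
/- Let n ≥ 1 and let A ∈ ℝ^{n×n} be a nonnegative matrix with zero diagonal whose directed graph is strongly connected, and let L = D − A be its Laplacian, where D = diag(d₁,…,d_n) with d_i = Σ_{j=1}^n A_{ij}. Then there exists a vector w ∈ ℝⁿ with w_i > 0 for all i such that wᵀL = 0ᵀ (i.e., Lᵀw = 0). -/
/-!
The rows of `L` sum to zero, so `L` is singular and has a nonzero left null vector `v`; with
`d j = ∑ k, A j k` this means `v j * d j = ∑ i, v i * A i j` for all `j`. Since `A ≥ 0`, the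
triangle inequality gives `|v j| * d j ≤ ∑ i, |v i| * A i j`, and both sides have the same total
`∑ i, |v i| * d i`, so `|v|` is again a left null vector. The same equation at `j` shows that
`|v j| > 0` as soon as `|v i| > 0` and `A i j > 0`, so strong connectivity spreads positivity of
`|v|` from one vertex to all of them.
-/

open Matrix

namespace Matrix

variable {ι : Type*} [Fintype ι] [DecidableEq ι]

def laplacian {R : Type*} [Ring R] (A : Matrix ι ι R) : Matrix ι ι R :=
  diagonal (fun i => ∑ j, A i j) - A

theorem laplacian_mulVec_one {R : Type*} [Ring R] (A : Matrix ι ι R) :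
    laplacian A *ᵥ 1 = 0 := by
  ext i
  simp only [laplacian, sub_mulVec, Pi.sub_apply, mulVec_diagonal]
  simp [mulVec, dotProduct]

theorem exists_vecMul_laplacian_eq_zero [Nonempty ι] {K : Type*} [Field K] (A : Matrix ι ι K) :
    ∃ v ≠ 0, v ᵥ* laplacian A = 0 :=
  exists_vecMul_eq_zero_iff.mpr <|
    exists_mulVec_eq_zero_iff.mp ⟨1, one_ne_zero, laplacian_mulVec_one A⟩

theorem vecMul_laplacian_eq_zero_iff {R : Type*} [CommRing R] (A : Matrix ι ι R) (v : ι → R) :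
    v ᵥ* laplacian A = 0 ↔ ∀ j, v j * ∑ k, A j k = ∑ i, v i * A i j := by
  simp only [funext_iff, laplacian, vecMul_sub, sub_eq_zero, vecMul_diagonal]
  simp only [vecMul, dotProduct]

variable {A : Matrix ι ι ℝ}

theorem abs_vecMul_laplacian_eq_zero (hA : ∀ i j, 0 ≤ A i j) {v : ι → ℝ}
    (hv : v ᵥ* laplacian A = 0) : |v| ᵥ* laplacian A = 0 := by
  rw [vecMul_laplacian_eq_zero_iff] at hv ⊢
  have hle : ∀ j ∈ Finset.univ, |v j| * ∑ k, A j k ≤ ∑ i, |v i| * A i j := fun j _ =>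
    calc |v j| * ∑ k, A j k = |∑ i, v i * A i j| := by
          rw [← hv j, abs_mul, abs_of_nonneg (Finset.sum_nonneg fun k _ => hA j k)]
      _ ≤ ∑ i, |v i * A i j| := Finset.abs_sum_le_sum_abs _ _
      _ = ∑ i, |v i| * A i j := by simp only [abs_mul, abs_of_nonneg (hA _ j)]
  have htotal : ∑ j, |v j| * ∑ k, A j k = ∑ j, ∑ i, |v i| * A i j := by
    simp only [Finset.mul_sum]
    exact Finset.sum_comm
  exact fun j => (Finset.sum_eq_sum_iff_of_le hle).mp htotal j (Finset.mem_univ j)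

theorem pos_of_vecMul_laplacian_eq_zero_of_pos (hA : ∀ i j, 0 ≤ A i j) {w : ι → ℝ}
    (hw : 0 ≤ w) (hwL : w ᵥ* laplacian A = 0) {i j : ι} (hij : 0 < A i j) (hi : 0 < w i) :
    0 < w j := by
  have hin : 0 < ∑ k, w k * A k j :=
    (mul_pos hi hij).trans_le <|
      Finset.single_le_sum (fun k _ => mul_nonneg (hw k) (hA k j)) (Finset.mem_univ i)
  rw [← (vecMul_laplacian_eq_zero_iff A w).mp hwL j] at hin
  exact pos_of_mul_pos_left hin (Finset.sum_nonneg fun k _ => hA j k)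

theorem pos_of_vecMul_laplacian_eq_zero_of_transGen (hA : ∀ i j, 0 ≤ A i j) {w : ι → ℝ}
    (hw : 0 ≤ w) (hwL : w ᵥ* laplacian A = 0) {i j : ι}
    (hij : Relation.TransGen (fun a c => 0 < A a c) i j) (hi : 0 < w i) : 0 < w j := by
  induction hij with
  | single hab => exact pos_of_vecMul_laplacian_eq_zero_of_pos hA hw hwL hab hi
  | tail _ hbc ih => exact pos_of_vecMul_laplacian_eq_zero_of_pos hA hw hwL hbc ih

theorem exists_pos_vecMul_laplacian_eq_zero (hA : ∀ i j, 0 ≤ A i j)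
    (hconn : ∀ i j, i ≠ j → Relation.TransGen (fun a c => 0 < A a c) i j) :
    ∃ w : ι → ℝ, (∀ i, 0 < w i) ∧ w ᵥ* laplacian A = 0 := by
  cases isEmpty_or_nonempty ι
  · exact ⟨0, isEmptyElim, Subsingleton.elim _ _⟩
  obtain ⟨v, hv0, hvL⟩ := exists_vecMul_laplacian_eq_zero A
  obtain ⟨i₀, hi₀⟩ := Function.ne_iff.mp hv0
  refine ⟨|v|, fun j => ?_, abs_vecMul_laplacian_eq_zero hA hvL⟩
  have hpos : 0 < |v| i₀ := abs_pos.mpr hi₀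
  obtain rfl | hne := eq_or_ne i₀ j
  · exact hpos
  · exact pos_of_vecMul_laplacian_eq_zero_of_transGen hA (abs_nonneg v)
      (abs_vecMul_laplacian_eq_zero hA hvL) (hconn i₀ j hne) hpos

end Matrix

theorem laplacian_positive_left_null_vector_general
    (n : ℕ)
    (A : Matrix (Fin n) (Fin n) ℝ)
    (hA : ∀ i j, 0 ≤ A i j)
    (hconn : ∀ i j : Fin n, i ≠ j → Relation.TransGen (fun a c => 0 < A a c) i j)
    (L : Matrix (Fin n) (Fin n) ℝ)
    (hL : L = Matrix.diagonal (fun i => ∑ j, A i j) - A) :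
    ∃ w : Fin n → ℝ, (∀ i, 0 < w i) ∧ Matrix.vecMul w L = 0 :=
  hL ▸ exists_pos_vecMul_laplacian_eq_zero hA hconn

/-- first part of Lemma 2.5: the Laplacian `L = D − A` of a
strongly connected weighted digraph admits a strictly positive left null
vector `w`, i.e. `wᵀ L = 0ᵀ`. -/
theorem laplacian_positive_left_null_vector
    (n : ℕ) (hn : 0 < n)
    (A : Matrix (Fin n) (Fin n) ℝ)
    (hA : ∀ i j, 0 ≤ A i j) (hAdiag : ∀ i, A i i = 0)
    (hconn : ∀ i j : Fin n, i ≠ j → Relation.TransGen (fun a c => 0 < A a c) i j)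
    (L : Matrix (Fin n) (Fin n) ℝ)
    (hL : L = Matrix.diagonal (fun i => ∑ j, A i j) - A) :
    ∃ w : Fin n → ℝ, (∀ i, 0 < w i) ∧ Matrix.vecMul w L = 0 :=
  laplacian_positive_left_null_vector_general n A hA hconn L hL
end

section
/- Let n ≥ 1 and let A ∈ ℝ^{n×n} be a nonnegative matrix with zero diagonal whose directed graph is strongly connected, let L = D − A be its Laplacian with D = diag(Σ_j A_{1j},…,Σ_j A_{nj}), and let w ∈ ℝⁿ be a vector with all entries positive satisfying wᵀL = 0ᵀ. Let b ∈ ℝⁿ be a nonnegative vector with b_i > 0 for at least one index i. Then the symmetric matrix G = (1/2)(diag(w)·L + Lᵀ·diag(w)) + diag(w)·diag(b) is positive definite, i.e., xᵀGx > 0 for all nonzero x ∈ ℝⁿ. -/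
/-!
Writing `Lx` as `(Lx)ᵢ = ∑ⱼ Aᵢⱼ (xᵢ - xⱼ)`, the condition `wᵀL = 0` says that the
weighted in-flow `∑ᵢ wᵢ Aᵢⱼ` at each node equals its weighted out-flow `wⱼ ∑ₖ Aⱼₖ`;
this balance symmetrizes the quadratic form into
`xᵀGx = ½ ∑ᵢⱼ wᵢ Aᵢⱼ (xᵢ - xⱼ)² + ∑ᵢ wᵢ bᵢ xᵢ²`.
Both sums are nonnegative. If both vanish, `x` is constant along every edge, hence
constant by strong connectivity, and vanishes at a node with `bᵢ > 0`; so `x = 0`.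
-/
open Matrix Finset

variable {ι : Type*} [Fintype ι]

theorem dotProduct_transpose_mulVec_self {R : Type*} [CommSemiring R] (M : Matrix ι ι R)
    (x : ι → R) : x ⬝ᵥ (Mᵀ *ᵥ x) = x ⬝ᵥ (M *ᵥ x) := by
  rw [mulVec_transpose, dotProduct_mulVec, dotProduct_comm]

theorem eq_zero_of_sum_mul_sq_eq_zero {α : Type*} {s : Finset α} {c y : α → ℝ}
    (hc : ∀ i ∈ s, 0 ≤ c i) (h : ∑ i ∈ s, c i * y i ^ 2 = 0) {i : α} (hi : i ∈ s)
    (hci : 0 < c i) : y i = 0 := by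
  have hterm := (sum_eq_zero_iff_of_nonneg fun j hj =>
    mul_nonneg (hc j hj) (sq_nonneg (y j))).1 h i hi
  simpa [hci.ne'] using hterm

theorem Relation.TransGen.apply_eq {α β : Type*} {r : α → α → Prop} {f : α → β}
    (hf : ∀ a c, r a c → f a = f c) {a c : α} (h : Relation.TransGen r a c) : f a = f c := by
  have := h.lift f (p := Eq) hf
  rwa [Relation.transGen_eq_self] at this

section Laplacian
variable [DecidableEq ι] (A : Matrix ι ι ℝ)

theorem laplacian_mulVec_apply (x : ι → ℝ) (i : ι) :
    ((diagonal (fun i => ∑ j, A i j) - A) *ᵥ x) i = ∑ j, A i j * (x i - x j) := by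
  rw [sub_mulVec, Pi.sub_apply, mulVec_diagonal]
  simp only [mulVec, dotProduct, mul_sub, sum_sub_distrib, sum_mul]

theorem vecMul_laplacian_apply (w : ι → ℝ) (j : ι) :
    (w ᵥ* (diagonal (fun i => ∑ k, A i k) - A)) j = w j * ∑ k, A j k - ∑ i, w i * A i j := by
  rw [vecMul_sub, Pi.sub_apply, vecMul_diagonal]
  simp only [vecMul, dotProduct]

theorem dotProduct_diagonal_mul_laplacian_mulVec {w : ι → ℝ}
    (hwL : w ᵥ* (diagonal (fun i => ∑ k, A i k) - A) = 0) (x : ι → ℝ) :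
    x ⬝ᵥ ((diagonal w * (diagonal (fun i => ∑ k, A i k) - A)) *ᵥ x)
      = (∑ i, ∑ j, w i * A i j * (x i - x j) ^ 2) / 2 := by
  have hbal : ∀ j, ∑ i, w i * A i j = w j * ∑ k, A j k := fun j => by
    have := congrFun hwL j
    rw [vecMul_laplacian_apply, Pi.zero_apply, sub_eq_zero] at this
    exact this.symm
  have hcross : ∑ i, ∑ j, w i * A i j * x j * (x i - x j)
      = - ∑ i, ∑ j, w i * A i j * x i * (x i - x j) := by
    have hsq : ∑ i, ∑ j, w i * A i j * x j ^ 2 = ∑ i, ∑ j, w i * A i j * x i ^ 2 := by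
      rw [sum_comm]
      refine sum_congr rfl fun j _ => ?_
      rw [← sum_mul, hbal, mul_sum, sum_mul]
    have hdiff : ∑ i, ∑ j, w i * A i j * x j * (x i - x j)
        + ∑ i, ∑ j, w i * A i j * x i * (x i - x j)
        = ∑ i, ∑ j, w i * A i j * x i ^ 2 - ∑ i, ∑ j, w i * A i j * x j ^ 2 := by
      simp only [← sum_add_distrib, ← sum_sub_distrib]
      exact sum_congr rfl fun i _ => sum_congr rfl fun j _ => by ring
    linarith
  calc x ⬝ᵥ ((diagonal w * (diagonal (fun i => ∑ k, A i k) - A)) *ᵥ x)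
      = ∑ i, ∑ j, w i * A i j * x i * (x i - x j) := by
        rw [← mulVec_mulVec]
        simp only [dotProduct, mulVec_diagonal, laplacian_mulVec_apply, mul_sum]
        exact sum_congr rfl fun i _ => sum_congr rfl fun j _ => by ring
    _ = (∑ i, ∑ j, w i * A i j * x i * (x i - x j)
          - ∑ i, ∑ j, w i * A i j * x j * (x i - x j)) / 2 := by rw [hcross]; ring
    _ = (∑ i, ∑ j, w i * A i j * (x i - x j) ^ 2) / 2 := by
        rw [← sum_sub_distrib]
        congr 1
        refine sum_congr rfl fun i _ => ?_
        rw [← sum_sub_distrib]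
        exact sum_congr rfl fun j _ => by ring

theorem dotProduct_symmetrized_laplacian_mulVec {w : ι → ℝ}
    (hwL : w ᵥ* (diagonal (fun i => ∑ k, A i k) - A) = 0) (b x : ι → ℝ) :
    x ⬝ᵥ (((1/2 : ℝ) • (diagonal w * (diagonal (fun i => ∑ k, A i k) - A)
        + (diagonal (fun i => ∑ k, A i k) - A)ᵀ * diagonal w) + diagonal w * diagonal b) *ᵥ x)
      = (∑ i, ∑ j, w i * A i j * (x i - x j) ^ 2) / 2 + ∑ i, w i * b i * x i ^ 2 := by
  set L := diagonal (fun i => ∑ k, A i k) - A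
  have hLt : Lᵀ * diagonal w = (diagonal w * L)ᵀ := by rw [transpose_mul, diagonal_transpose]
  rw [hLt, add_mulVec, smul_mulVec, add_mulVec, dotProduct_add, dotProduct_smul, dotProduct_add,
    dotProduct_transpose_mulVec_self, dotProduct_diagonal_mul_laplacian_mulVec A hwL, diagonal_mul_diagonal]
  simp only [dotProduct, mulVec_diagonal, smul_eq_mul]
  congr 1
  · ring
  · exact sum_congr rfl fun i _ => by ring

end Laplacian

theorem eq_of_sum_mul_sq_sub_eq_zero {A : Matrix ι ι ℝ} (hA : ∀ i j, 0 ≤ A i j)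
    {w : ι → ℝ} (hw : ∀ i, 0 < w i)
    (hconn : ∀ i j, i ≠ j → Relation.TransGen (fun a c => 0 < A a c) i j) {x : ι → ℝ}
    (h : ∑ i, ∑ j, w i * A i j * (x i - x j) ^ 2 = 0) (i j : ι) : x i = x j := by
  rcases eq_or_ne i j with rfl | hij
  · rfl
  rw [← Fintype.sum_prod_type'] at h
  refine (hconn i j hij).apply_eq fun a c hac => sub_eq_zero.1 ?_
  exact eq_zero_of_sum_mul_sq_eq_zero (c := fun p : ι × ι => w p.1 * A p.1 p.2)
    (fun p _ => mul_nonneg (hw p.1).le (hA p.1 p.2)) h (mem_univ (a, c)) (mul_pos (hw a) hac)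

theorem G_positive_definite_general
    (n : ℕ)
    (A : Matrix (Fin n) (Fin n) ℝ)
    (hA : ∀ i j, 0 ≤ A i j)
    (hconn : ∀ i j : Fin n, i ≠ j → Relation.TransGen (fun a c => 0 < A a c) i j)
    (L : Matrix (Fin n) (Fin n) ℝ)
    (hL : L = Matrix.diagonal (fun i => ∑ j, A i j) - A)
    (w : Fin n → ℝ) (hw : ∀ i, 0 < w i)
    (hwL : Matrix.vecMul w L = 0)
    (b : Fin n → ℝ) (hb : ∀ i, 0 ≤ b i) (hbpos : ∃ i, 0 < b i)
    (G : Matrix (Fin n) (Fin n) ℝ)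
    (hG : G = (1/2 : ℝ) • (Matrix.diagonal w * L + Lᵀ * Matrix.diagonal w)
        + Matrix.diagonal w * Matrix.diagonal b) :
    ∀ x : Fin n → ℝ, x ≠ 0 → 0 < x ⬝ᵥ G.mulVec x := by
  intro x hx
  subst hL hG
  rw [dotProduct_symmetrized_laplacian_mulVec A hwL]
  have hE : 0 ≤ ∑ i, ∑ j, w i * A i j * (x i - x j) ^ 2 :=
    sum_nonneg fun i _ => sum_nonneg fun j _ =>
      mul_nonneg (mul_nonneg (hw i).le (hA i j)) (sq_nonneg _)
  have hB : 0 ≤ ∑ i, w i * b i * x i ^ 2 :=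
    sum_nonneg fun i _ => mul_nonneg (mul_nonneg (hw i).le (hb i)) (sq_nonneg _)
  have hE2 : 0 ≤ (∑ i, ∑ j, w i * A i j * (x i - x j) ^ 2) / 2 := by positivity
  refine (add_nonneg hE2 hB).lt_of_ne fun h => hx ?_
  obtain ⟨hE0, hB0⟩ := (add_eq_zero_iff_of_nonneg hE2 hB).1 h.symm
  have hconst := eq_of_sum_mul_sq_sub_eq_zero hA hw hconn (by linarith)
  obtain ⟨i₀, hi₀⟩ := hbpos
  have hx₀ : x i₀ = 0 := eq_zero_of_sum_mul_sq_eq_zero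
    (fun i _ => mul_nonneg (hw i).le (hb i)) hB0 (mem_univ i₀) (mul_pos (hw i₀) hi₀)
  funext i
  rw [← hconst i₀ i, hx₀, Pi.zero_apply]

/-- second part of Lemma 2.5: with `w > 0` a left null vector of
the Laplacian `L` of a strongly connected weighted digraph and `b ≥ 0` with at
least one positive entry, the symmetric matrix
`G = (1/2)(diag(w)L + Lᵀdiag(w)) + diag(w)diag(b)` is positive definite. -/
theorem G_positive_definite
    (n : ℕ) (hn : 0 < n)
    (A : Matrix (Fin n) (Fin n) ℝ)
    (hA : ∀ i j, 0 ≤ A i j) (hAdiag : ∀ i, A i i = 0)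
    (hconn : ∀ i j : Fin n, i ≠ j → Relation.TransGen (fun a c => 0 < A a c) i j)
    (L : Matrix (Fin n) (Fin n) ℝ)
    (hL : L = Matrix.diagonal (fun i => ∑ j, A i j) - A)
    (w : Fin n → ℝ) (hw : ∀ i, 0 < w i)
    (hwL : Matrix.vecMul w L = 0)
    (b : Fin n → ℝ) (hb : ∀ i, 0 ≤ b i) (hbpos : ∃ i, 0 < b i)
    (G : Matrix (Fin n) (Fin n) ℝ)
    (hG : G = (1/2 : ℝ) • (Matrix.diagonal w * L + Lᵀ * Matrix.diagonal w)
        + Matrix.diagonal w * Matrix.diagonal b) :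
    ∀ x : Fin n → ℝ, x ≠ 0 → 0 < x ⬝ᵥ G.mulVec x :=
  G_positive_definite_general n A hA hconn L hL w hw hwL b hb hbpos G hG
end

section
/- For all v, y ∈ ℝ, ∫_{⌊v⌉²}^{y} (⌊s⌉^{1/2} − v) ds ≤ |y − ⌊v⌉²| · |v − ⌊y⌉^{1/2}|, i.e., the integral from sign(v)·v² to y of (sign(s)·√|s| − v) ds is at most |y − sign(v)·v²| · |v − sign(y)·√|y||. -/
/-!
`⌊·⌉^{1/2}` is monotone and inverts `⌊·⌉²`, so the integrand `⌊s⌉^{1/2} − v` vanishes at the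
lower limit `⌊v⌉²` and, on the interval of integration, is bounded in absolute value by its
value `⌊y⌉^{1/2} − v` at the upper limit. The integral is thus at most the length of the
interval times that bound.
-/

/-- The signed power `⌊x⌉^a = sign(x) · |x|^a` (with `sign 0 = 0`). -/
noncomputable def spow (x a : ℝ) : ℝ := Real.sign x * |x| ^ a

open Set

theorem spow_of_nonneg {x : ℝ} (hx : 0 ≤ x) (a : ℝ) (ha : a ≠ 0) : spow x a = x ^ a := by
  rcases hx.eq_or_lt with rfl | hx
  · simp [spow, Real.zero_rpow ha]
  · simp [spow, Real.sign_of_pos hx, abs_of_pos hx]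

theorem spow_of_nonpos {x : ℝ} (hx : x ≤ 0) (a : ℝ) (ha : a ≠ 0) : spow x a = -(-x) ^ a := by
  rcases hx.eq_or_lt with rfl | hx
  · simp [spow, Real.zero_rpow ha]
  · simp [spow, Real.sign_of_neg hx, abs_of_neg hx]

theorem spow_monotone {a : ℝ} (ha : 0 < a) : Monotone (spow · a) := by
  intro x y hxy
  rcases le_total 0 x with hx | hx <;> rcases le_total 0 y with hy | hy
  · simp only [spow_of_nonneg hx a ha.ne', spow_of_nonneg hy a ha.ne']
    exact Real.rpow_le_rpow hx hxy ha.le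
  · obtain rfl : x = 0 := by linarith
    obtain rfl : y = 0 := by linarith
    rfl
  · simp only [spow_of_nonpos hx a ha.ne', spow_of_nonneg hy a ha.ne']
    linarith [Real.rpow_nonneg (neg_nonneg.2 hx) a, Real.rpow_nonneg hy a]
  · simp only [spow_of_nonpos hx a ha.ne', spow_of_nonpos hy a ha.ne', neg_le_neg_iff]
    exact Real.rpow_le_rpow (neg_nonneg.2 hy) (neg_le_neg hxy) ha.le

theorem spow_spow_inv (x : ℝ) {a : ℝ} (ha : a ≠ 0) : spow (spow x a) a⁻¹ = x := by
  rcases le_total 0 x with hx | hx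
  · rw [spow_of_nonneg hx a ha, spow_of_nonneg (Real.rpow_nonneg hx a) _ (inv_ne_zero ha),
      Real.rpow_rpow_inv hx ha]
  · rw [spow_of_nonpos hx a ha, spow_of_nonpos (neg_nonpos.2 (Real.rpow_nonneg (neg_nonneg.2 hx) a))
      _ (inv_ne_zero ha), neg_neg, Real.rpow_rpow_inv (neg_nonneg.2 hx) ha, neg_neg]

theorem Monotone.integral_sub_left_le {f : ℝ → ℝ} (hf : Monotone f) (a b : ℝ) :
    ∫ s in a..b, (f s - f a) ≤ |b - a| * |f b - f a| := by
  have hbound : ∀ s ∈ uIoc a b, ‖f s - f a‖ ≤ |f b - f a| := fun s hs =>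
    abs_sub_left_of_mem_uIcc (hf.mapsTo_uIcc (uIoc_subset_uIcc hs))
  calc ∫ s in a..b, (f s - f a)
      ≤ ‖∫ s in a..b, (f s - f a)‖ := le_abs_self _
    _ ≤ |f b - f a| * |b - a| := intervalIntegral.norm_integral_le_of_norm_le_const hbound
    _ = |b - a| * |f b - f a| := mul_comm _ _

/-- inequality (23): the Lyapunov summand
`∫_{⌊v⌉²}^{y} (⌊s⌉^{1/2} − v) ds` is at most `|y − ⌊v⌉²| · |v − ⌊y⌉^{1/2}|`. -/
theorem lyapunov_summand_upper_bound (v y : ℝ) :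
    (∫ s in (spow v 2)..y, (spow s (1/2) - v)) ≤ |y - spow v 2| * |v - spow y (1/2)| := by
  have hinv : spow (spow v 2) (1/2) = v := by
    rw [one_div, spow_spow_inv v two_ne_zero]
  have h := (spow_monotone one_half_pos).integral_sub_left_le (spow v 2) y
  rwa [hinv, abs_sub_comm (spow y _)] at h
end

section
/- For all v, y ∈ ℝ, |y − ⌊v⌉²| ≤ 3·|v|² + 2·|v − ⌊y⌉^{1/2}|², i.e., |y − sign(v)·v²| ≤ 3v² + 2(v − sign(y)·√|y|)². -/
theorem Real.sign_mul_abs (x : ℝ) : Real.sign x * |x| = x := by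
  rcases lt_trichotomy x 0 with hx | rfl | hx
  · rw [Real.sign_of_neg hx, abs_of_neg hx, neg_one_mul, neg_neg]
  · rw [abs_zero, mul_zero]
  · rw [Real.sign_of_pos hx, abs_of_pos hx, one_mul]

theorem Real.abs_sign_mul_sign (x : ℝ) : |Real.sign x| * Real.sign x = Real.sign x := by
  rcases Real.sign_apply_eq x with h | h | h <;> norm_num [h]

theorem spow_two (x : ℝ) : spow x 2 = x * |x| := by
  rw [spow, Real.rpow_two, sq, ← mul_assoc, Real.sign_mul_abs]

theorem spow_half_mul_abs (y : ℝ) : spow y (1 / 2) * |spow y (1 / 2)| = y := by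
  have hsq : √|y| * √|y| = |y| := Real.mul_self_sqrt (abs_nonneg y)
  rw [spow, ← Real.sqrt_eq_rpow, abs_mul, abs_of_nonneg (Real.sqrt_nonneg _)]
  calc Real.sign y * √|y| * (|Real.sign y| * √|y|)
      = |Real.sign y| * Real.sign y * (√|y| * √|y|) := by ring
    _ = y := by rw [Real.abs_sign_mul_sign, hsq, Real.sign_mul_abs]

theorem abs_mul_abs_sub_mul_abs_le (a b : ℝ) :
    |(a * |a|) - (b * |b|)| ≤ |a - b| * (|a| + |b|) := by
  -- The second summand is bounded via `||a| - |b|| ≤ |a - b|` and `|a + b| ≤ |a| + |b|`.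
  have hsplit : a * |a| - b * |b| = ((a - b) * (|a| + |b|) + (a + b) * (|a| - |b|)) / 2 := by
    ring
  have hcross : |(a + b) * (|a| - |b|)| ≤ |a - b| * (|a| + |b|) := by
    rw [abs_mul, mul_comm]
    exact mul_le_mul (abs_abs_sub_abs_le_abs_sub a b) (abs_add_le a b) (abs_nonneg _)
      (abs_nonneg _)
  rw [hsplit, abs_div, abs_two]
  calc |(a - b) * (|a| + |b|) + (a + b) * (|a| - |b|)| / 2
      ≤ (|(a - b) * (|a| + |b|)| + |(a + b) * (|a| - |b|)|) / 2 := by gcongr; exact abs_add_le _ _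
    _ ≤ |a - b| * (|a| + |b|) := by
      rw [abs_mul, abs_of_nonneg (by positivity : 0 ≤ |a| + |b|)]
      linarith

theorem abs_sub_mul_add_abs_le (a b : ℝ) :
    |a - b| * (|a| + |b|) ≤ |b| ^ 2 + 2 * |b - a| ^ 2 := by
  have htri : |a| - |b| ≤ |a - b| := abs_sub_abs_le_abs_sub a b
  rw [abs_sub_comm b a]
  nlinarith [sq_nonneg (|a - b| - |b|), abs_nonneg (a - b)]

/-- inequality (15): `|y − ⌊v⌉²| ≤ 3|v|² + 2|v − ⌊y⌉^{1/2}|²`. -/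
theorem ineq_15 (v y : ℝ) :
    |y - spow v 2| ≤ 3 * |v| ^ 2 + 2 * |v - spow y (1/2)| ^ 2 := by
  set s := spow y (1 / 2)
  calc |y - spow v 2| = |(s * |s|) - (v * |v|)| := by rw [spow_half_mul_abs, spow_two]
    _ ≤ |s - v| * (|s| + |v|) := abs_mul_abs_sub_mul_abs_le s v
    _ ≤ |v| ^ 2 + 2 * |v - s| ^ 2 := abs_sub_mul_add_abs_le s v
    _ ≤ 3 * |v| ^ 2 + 2 * |v - s| ^ 2 := by linarith [sq_nonneg |v|]
end

section
/- Let n ≥ 1, let w ∈ ℝⁿ with 0 < w_i for all i, let ρ ∈ (0,1), and set γ₁ = (1+ρ)·max_i w_i, γ₀ = (1+3γ₁)/(1−ρ), and γ₂ = 2γ₁/(1+ρ) + γ₀/3. Define, for y, v ∈ ℝⁿ, V(y,v) = Σ_{i=1}^n w_i ∫_{⌊v_i⌉²}^{y_i} (⌊s⌉^{1/2} − v_i) ds + (γ₀/3)·Σ_{i=1}^n |v_i|³. Then for all y, v ∈ ℝⁿ: V(y,v) ≤ γ₂·( Σ_{i=1}^n |v_i − ⌊y_i⌉^{1/2}|³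 + Σ_{i=1}^n |v_i|³ ). -/
lemma spow_two_eq (c : ℝ) : spow c 2 = c * |c| := by
  unfold spow
  rcases lt_trichotomy c 0 with h | h | h
  · rw [Real.sign_of_neg h, show ((2:ℝ)) = ((2:ℕ):ℝ) by norm_num, Real.rpow_natCast]
    rw [abs_of_neg h]; ring
  · simp [h]
  · rw [Real.sign_of_pos h, show ((2:ℝ)) = ((2:ℕ):ℝ) by norm_num, Real.rpow_natCast]
    rw [abs_of_pos h]; ring

lemma spow_half_abs (y : ℝ) : |spow y (1/2)| = |y| ^ ((1:ℝ)/2) := by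
  unfold spow
  rcases lt_trichotomy y 0 with h | h | h
  · rw [Real.sign_of_neg h, abs_mul]
    simp [abs_of_nonneg (Real.rpow_nonneg (abs_nonneg y) _)]
  · simp [h, Real.zero_rpow]
  · rw [Real.sign_of_pos h, abs_mul]
    simp [abs_of_nonneg (Real.rpow_nonneg (abs_nonneg y) _)]

lemma spow_half_sq (y : ℝ) : spow (spow y (1/2)) 2 = y := by
  rw [spow_two_eq, spow_half_abs]
  unfold spow
  rcases lt_trichotomy y 0 with h | h | h
  · rw [Real.sign_of_neg h,
      show (-1:ℝ) * |y| ^ ((1:ℝ)/2) * |y| ^ ((1:ℝ)/2)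
        = -1 * (|y| ^ ((1:ℝ)/2) * |y| ^ ((1:ℝ)/2)) by ring,
      ← Real.rpow_add (abs_pos.mpr h.ne)]
    norm_num [abs_of_neg h]
  · simp [h]
  · rw [Real.sign_of_pos h,
      show (1:ℝ) * |y| ^ ((1:ℝ)/2) * |y| ^ ((1:ℝ)/2)
        = 1 * (|y| ^ ((1:ℝ)/2) * |y| ^ ((1:ℝ)/2)) by ring,
      ← Real.rpow_add (abs_pos.mpr h.ne')]
    norm_num [abs_of_pos h]

lemma spow_half_le (s : ℝ) : ‖spow s (1/2)‖ ≤ |s| ^ ((1:ℝ)/2) := by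
  rw [Real.norm_eq_abs, spow_half_abs]

lemma cont_rpow_half : Continuous fun s : ℝ => |s| ^ ((1:ℝ)/2) :=
  continuous_abs.rpow_const (fun x => Or.inr (by norm_num))

lemma cont_spow_half : Continuous fun s : ℝ => spow s (1/2) := by
  rw [continuous_iff_continuousAt]
  intro s
  rcases lt_trichotomy s 0 with h | h | h
  · have hev : (fun t : ℝ => spow t (1/2)) =ᶠ[nhds s] fun t => -(|t| ^ ((1:ℝ)/2)) := by
      filter_upwards [Iio_mem_nhds h] with t ht
      unfold spow; rw [Real.sign_of_neg ht]; ring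
    exact ContinuousAt.congr (cont_rpow_half.neg.continuousAt) hev.symm
  · subst h
    have : ContinuousAt (fun s : ℝ => |s| ^ ((1:ℝ)/2)) 0 := cont_rpow_half.continuousAt
    rw [ContinuousAt] at this ⊢
    have h0 : spow 0 (1/2) = 0 := by unfold spow; simp
    rw [h0]
    have h0' : |(0:ℝ)| ^ ((1:ℝ)/2) = 0 := by simp [Real.zero_rpow]
    rw [h0'] at this
    exact squeeze_zero_norm (fun t => spow_half_le t) this
  · have hev : (fun t : ℝ => spow t (1/2)) =ᶠ[nhds s] fun t => |t| ^ ((1:ℝ)/2) := by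
      filter_upwards [Ioi_mem_nhds h] with t ht
      unfold spow; rw [Real.sign_of_pos ht]; ring
    exact ContinuousAt.congr (cont_rpow_half.continuousAt) hev.symm

lemma hasDeriv_F (s : ℝ) :
    HasDerivAt (fun t : ℝ => 2/3 * |t| ^ ((3:ℝ)/2)) (spow s (1/2)) s := by
  rcases lt_trichotomy s 0 with h | h | h
  · have hd : HasDerivAt (fun t : ℝ => 2/3 * (-t) ^ ((3:ℝ)/2)) (spow s (1/2)) s := by
      have h1 : HasDerivAt (fun t : ℝ => -t) (-1) s := (hasDerivAt_id s).neg
      have h2 := h1.rpow_const (p := (3:ℝ)/2) (Or.inl (by simpa using h.ne))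
      have h3 := h2.const_mul (2/3 : ℝ)
      refine h3.congr_deriv ?_
      unfold spow
      rw [Real.sign_of_neg h, abs_of_neg h]
      rw [show (3:ℝ)/2 - 1 = 1/2 by norm_num]
      ring
    apply hd.congr_of_eventuallyEq
    filter_upwards [Iio_mem_nhds h] with t ht
    rw [abs_of_neg ht]
  · subst h
    rw [hasDerivAt_iff_tendsto]
    have h0 : spow 0 (1/2) = 0 := by unfold spow; simp
    rw [h0]
    have key : ∀ x : ℝ, ‖x - 0‖⁻¹ * ‖2/3 * |x| ^ ((3:ℝ)/2) - 2/3 * |(0:ℝ)| ^ ((3:ℝ)/2) - (x - 0) • (0:ℝ)‖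
        = 2/3 * |x| ^ ((1:ℝ)/2) := by
      intro x
      rcases eq_or_ne x 0 with rfl | hx
      · simp [Real.zero_rpow]
      · have hax : (0:ℝ) < |x| := abs_pos.mpr hx
        rw [show |(0:ℝ)| ^ ((3:ℝ)/2) = 0 by simp [Real.zero_rpow]]
        simp only [sub_zero, smul_zero, Real.norm_eq_abs]
        rw [mul_zero, sub_zero, abs_of_nonneg (by positivity : (0:ℝ) ≤ 2/3 * |x| ^ ((3:ℝ)/2))]
        rw [show (3:ℝ)/2 = 1 + 1/2 by norm_num, Real.rpow_add hax, Real.rpow_one]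
        field_simp
    simp only [key]
    have : Continuous fun x : ℝ => 2/3 * |x| ^ ((1:ℝ)/2) := continuous_const.mul cont_rpow_half
    have := this.tendsto 0
    simpa [Real.zero_rpow] using this
  · have hd : HasDerivAt (fun t : ℝ => 2/3 * t ^ ((3:ℝ)/2)) (spow s (1/2)) s := by
      have h2 := (Real.hasDerivAt_rpow_const (x := s) (p := (3:ℝ)/2) (Or.inl h.ne'))
      have h3 := h2.const_mul (2/3 : ℝ)
      refine h3.congr_deriv ?_
      unfold spow
      rw [Real.sign_of_pos h, abs_of_pos h]
      rw [show (3:ℝ)/2 - 1 = 1/2 by norm_num]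
      ring
    apply hd.congr_of_eventuallyEq
    filter_upwards [Ioi_mem_nhds h] with t ht
    rw [abs_of_pos ht]

lemma mul_spow_two (v : ℝ) : v * spow v 2 = |v|^3 := by
  rcases abs_cases v with ⟨h, _⟩ | ⟨h, _⟩ <;> rw [spow_two_eq, h] <;> ring

lemma abs_spow_two_rpow (v : ℝ) : |spow v 2| ^ ((3:ℝ)/2) = |v|^3 := by
  have h1 : |spow v 2| = |v| ^ (2:ℝ) := by
    rw [spow_two_eq, abs_mul, abs_abs,
      show ((2:ℝ)) = ((2:ℕ):ℝ) by norm_num, Real.rpow_natCast, sq]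
  rw [h1, ← Real.rpow_mul (abs_nonneg v)]
  norm_num

lemma integral_eval (v y : ℝ) :
    (∫ s in (spow v 2)..y, (spow s (1/2) - v))
      = 2/3 * |y| ^ ((3:ℝ)/2) + 1/3 * |v|^3 - v * y := by
  have hF : ∀ t ∈ Set.uIcc (spow v 2) y,
      HasDerivAt (fun t : ℝ => 2/3 * |t| ^ ((3:ℝ)/2) - v * t) (spow t (1/2) - v) t := by
    intro t _
    have h1 : HasDerivAt (fun t : ℝ => v * t) v t := by
      simpa using (hasDerivAt_id t).const_mul v
    exact (hasDeriv_F t).sub h1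
  have hint : IntervalIntegrable (fun s => spow s (1/2) - v)
      MeasureTheory.volume (spow v 2) y :=
    (cont_spow_half.sub continuous_const).intervalIntegrable _ _
  rw [intervalIntegral.integral_eq_sub_of_hasDerivAt hF hint]
  have h1 : |spow v 2| ^ ((3:ℝ)/2) = |v|^3 := abs_spow_two_rpow v
  have h2 : v * spow v 2 = |v|^3 := mul_spow_two v
  rw [h1, h2]; ring

lemma key_ineq (r v : ℝ) : 2/3 * |r|^3 - v * (r * |r|) ≤ 5/3 * |r - v|^3 := by
  rcases le_or_gt 0 r with hr | hr
  · rw [abs_of_nonneg hr]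
    rcases le_or_gt v r with hv | hv
    · rw [abs_of_nonneg (by linarith)]
      nlinarith [mul_nonneg (show (0:ℝ) ≤ 2*r - v by linarith) (sq_nonneg (r - 2*v)),
        mul_nonneg (show (0:ℝ) ≤ r - v by linarith) (sq_nonneg (r - v))]
    · rw [abs_of_neg (by linarith)]
      nlinarith [mul_nonneg (show (0:ℝ) ≤ v - r by linarith) (sq_nonneg r),
        mul_nonneg hr (sq_nonneg r),
        mul_nonneg (show (0:ℝ) ≤ v - r by linarith) (sq_nonneg (v - r))]
  · rw [abs_of_neg hr]
    rcases le_or_gt r v with hv | hv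
    · rw [abs_of_nonpos (by linarith)]
      nlinarith [mul_nonneg (show (0:ℝ) ≤ v - 2*r by linarith) (sq_nonneg (2*v - r)),
        mul_nonneg (show (0:ℝ) ≤ v - r by linarith) (sq_nonneg (v - r))]
    · rw [abs_of_pos (by linarith : (0:ℝ) < r - v)]
      nlinarith [mul_nonneg (show (0:ℝ) ≤ r - v by linarith) (sq_nonneg r),
        mul_nonneg (show (0:ℝ) ≤ -r by linarith) (sq_nonneg r),
        mul_nonneg (show (0:ℝ) ≤ r - v by linarith) (sq_nonneg (r - v))]

lemma pointwise_bound (v y : ℝ) :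
    (∫ s in (spow v 2)..y, (spow s (1/2) - v))
      ≤ 5/3 * |v - spow y (1/2)|^3 + 1/3 * |v|^3 := by
  set r := spow y (1/2) with hrdef
  have hy : y = r * |r| := by rw [← spow_two_eq]; exact (spow_half_sq y).symm
  have habs : |y| ^ ((3:ℝ)/2) = |r|^3 := by
    rw [hy, ← spow_two_eq]; exact abs_spow_two_rpow r
  rw [integral_eval, habs, hy, abs_sub_comm]
  linarith [key_ineq r v]

/-- inequality (25): upper bound of the Lyapunov function
`V = Σᵢ wᵢ ∫_{⌊vᵢ⌉²}^{yᵢ}(⌊s⌉^{1/2} − vᵢ) ds + (γ₀/3) Σᵢ |vᵢ|³` in terms of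
cubic power sums, with `γ₂ = 2γ₁/(1+ρ) + γ₀/3`. -/
theorem lyapunov_upper_bound
    (n : ℕ) (hn : 0 < n)
    (w : Fin n → ℝ) (hw : ∀ i, 0 < w i)
    (ρ : ℝ) (hρ0 : 0 < ρ) (hρ1 : ρ < 1)
    (γ1 γ0 γ2 : ℝ)
    (hγ1 : γ1 = (1 + ρ) * Finset.univ.sup' ⟨⟨0, hn⟩, Finset.mem_univ _⟩ w)
    (hγ0 : γ0 = (1 + 3 * γ1) / (1 - ρ))
    (hγ2 : γ2 = 2 * γ1 / (1 + ρ) + γ0 / 3) :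
    ∀ y v : Fin n → ℝ,
      (∑ i, w i * ∫ s in (spow (v i) 2)..(y i), (spow s (1/2) - v i))
        + (γ0 / 3) * ∑ i, |v i| ^ 3
      ≤ γ2 * ((∑ i, |v i - spow (y i) (1/2)| ^ 3) + ∑ i, |v i| ^ 3) := by
  intro y v
  set M := Finset.univ.sup' ⟨⟨0, hn⟩, Finset.mem_univ _⟩ w with hM
  have hwM : ∀ i, w i ≤ M := fun i => Finset.le_sup' w (Finset.mem_univ i)
  have hMpos : 0 < M := lt_of_lt_of_le (hw ⟨0, hn⟩) (hwM ⟨0, hn⟩)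
  have h1ρ : (0:ℝ) < 1 + ρ := by linarith
  have hγ1pos : 0 < γ1 := by rw [hγ1]; positivity
  have hγ0pos : 0 < γ0 := by
    rw [hγ0]; apply div_pos <;> linarith
  have hγ2' : γ2 = 2 * M + γ0 / 3 := by
    rw [hγ2, hγ1, mul_comm (1+ρ) M, ← mul_assoc, mul_div_assoc,
      div_self h1ρ.ne', mul_one]
  set A := ∑ i, |v i - spow (y i) (1/2)| ^ 3 with hA
  set B := ∑ i, |v i| ^ 3 with hB
  have hAnn : 0 ≤ A := Finset.sum_nonneg fun i _ => by positivity
  have hBnn : 0 ≤ B := Finset.sum_nonneg fun i _ => by positivity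
  have hsum : (∑ i, w i * ∫ s in (spow (v i) 2)..(y i), (spow s (1/2) - v i))
      ≤ ∑ i, M * (5/3 * |v i - spow (y i) (1/2)|^3 + 1/3 * |v i|^3) := by
    apply Finset.sum_le_sum
    intro i _
    have hpt := pointwise_bound (v i) (y i)
    have hrhs : (0:ℝ) ≤ 5/3 * |v i - spow (y i) (1/2)|^3 + 1/3 * |v i|^3 := by positivity
    rcases le_or_gt 0 (∫ s in (spow (v i) 2)..(y i), (spow s (1/2) - v i)) with hW | hW
    · calc w i * ∫ s in (spow (v i) 2)..(y i), (spow s (1/2) - v i)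
          ≤ M * ∫ s in (spow (v i) 2)..(y i), (spow s (1/2) - v i) :=
            mul_le_mul_of_nonneg_right (hwM i) hW
        _ ≤ M * (5/3 * |v i - spow (y i) (1/2)|^3 + 1/3 * |v i|^3) :=
            mul_le_mul_of_nonneg_left hpt hMpos.le
    · have : w i * ∫ s in (spow (v i) 2)..(y i), (spow s (1/2) - v i) ≤ 0 :=
        le_of_lt (mul_neg_of_pos_of_neg (hw i) hW)
      exact this.trans (mul_nonneg hMpos.le hrhs)
  have hsum2 : ∑ i, M * (5/3 * |v i - spow (y i) (1/2)|^3 + 1/3 * |v i|^3)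
      = M * (5/3 * A + 1/3 * B) := by
    rw [← Finset.mul_sum]
    congr 1
    rw [hA, hB, Finset.mul_sum, Finset.mul_sum, ← Finset.sum_add_distrib]
  rw [hsum2] at hsum
  have final : M * (5/3 * A + 1/3 * B) + γ0/3 * B ≤ γ2 * (A + B) := by
    rw [hγ2']
    nlinarith [mul_nonneg hMpos.le hAnn, mul_nonneg hMpos.le hBnn,
      mul_nonneg hγ0pos.le hAnn]
  linarith
end
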